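/- arXiv:1205.3745 — 2 statements merged into one kernel-verified Lean document; each statement's English description precedes it below -/
import Mathlib

section
/- Let V₁, V₂, W be finite-dimensional complex Hilbert spaces, let |ψ₀⟩, |ψ₁⟩ ∈ V₁, |φ₀⟩, |φ₁⟩ ∈ V₂ and |Φ⟩ ∈ W be arbitrary vectors, and let α, β, γ, δ ∈ ℂ satisfy |α|²+|β|² = |γ|²+|δ|² = 1. Consider the state |Ψ_init⟩ = (α|ψ₀⟩|0⟩_A + β|ψ₁⟩|1⟩_A) ⊗ (γ|φ₀⟩|0⟩_B + δ|φ₁⟩|1⟩_B) ⊗ |Ψ⁺⟩_{CD} ⊗ |Φ⟩, where A, B, C, D are qubit registers. Then for each measurement outcome a ∈ {0,1}, applying CNOT^{(A,C)}, then CNOT^{(B,C)}, then projecting register C onto |a⟩ and applying σ_X^a to register D, yields the vector (1/√2)·[(αγ|ψ₀⟩|φ₀⟩|00⟩_{AB} + βδ|ψ₁⟩|φ₁⟩|11⟩_{AB})|0⟩_D + (αδ|ψ₀⟩|φ₁⟩|01⟩_{AB} + βγ|ψ₁⟩|φ₀⟩|10⟩_{AB})|1⟩_D] ⊗ |Φ⟩.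 (This is the action of the Connection:Add operation Add^{A,B}_{C→D}.) -/
open scoped TensorProduct

namespace QNC

noncomputable section

/-- The state space of `n` qubit registers: amplitudes on the computational basis. -/
abbrev QState (n : ℕ) : Type := (Fin n → Bool) → ℂ

/-- Computational basis state `|x⟩`. -/
def ket {n : ℕ} (x : Fin n → Bool) : QState n := fun y => if y = x then 1 else 0

/-- The CNOT gate with control register `c` and target register `t`. -/
def CNOTgate {n : ℕ} (c t : Fin n) : QState n →ₗ[ℂ] QState n where
  toFun ψ := fun x => ψ (Function.update x t (xor (x c) (x t)))
  map_add' _ _ := rfl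
  map_smul' _ _ := rfl

/-- The Pauli `σ_X` gate on register `i`. -/
def Xgate {n : ℕ} (i : Fin n) : QState n →ₗ[ℂ] QState n where
  toFun ψ := fun x => ψ (Function.update x i (!(x i)))
  map_add' _ _ := rfl
  map_smul' _ _ := rfl

/-- The Pauli `σ_Z` gate on register `i`. -/
def Zgate {n : ℕ} (i : Fin n) : QState n →ₗ[ℂ] QState n where
  toFun ψ := fun x => if x i then -ψ x else ψ x
  map_add' ψ φ := by funext x; by_cases h : x i <;> simp [h, neg_add] <;> ring
  map_smul' c ψ := by funext x; by_cases h : x i <;> simp [h]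

/-- The Hadamard gate on register `i`. -/
def Hgate {n : ℕ} (i : Fin n) : QState n →ₗ[ℂ] QState n where
  toFun ψ := fun x => (Real.sqrt 2 : ℂ)⁻¹ *
      (ψ (Function.update x i false) + (if x i then -1 else 1) * ψ (Function.update x i true))
  map_add' ψ φ := by funext x; simp only [Pi.add_apply]; ring
  map_smul' c ψ := by
    funext x; simp only [Pi.smul_apply, smul_eq_mul, RingHom.id_apply]; ring

/-- The computational-basis measurement map `|a⟩⟨a|_i ⊗ I` for outcome `a` on register `i`
(the measured register is kept, left in the basis state `|a⟩`, and can be disregarded). -/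
def proj {n : ℕ} (i : Fin n) (a : Bool) : QState n →ₗ[ℂ] QState n where
  toFun ψ := fun x => if x i = a then ψ x else 0
  map_add' ψ φ := by funext x; by_cases h : x i = a <;> simp [h]
  map_smul' c ψ := by funext x; by_cases h : x i = a <;> simp [h]

/-- `σ_X^a` on register `i`. -/
def Xpow {n : ℕ} (a : Bool) (i : Fin n) : QState n →ₗ[ℂ] QState n :=
  if a then Xgate i else LinearMap.id

/-- `σ_Z^a` on register `i`. -/
def Zpow {n : ℕ} (a : Bool) (i : Fin n) : QState n →ₗ[ℂ] QState n :=
  if a then Zgate i else LinearMap.id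

/-- The Connection operation `Con^c_{r→t}` with measurement outcome `a`:
apply `CNOT^{(c,r)}`, project register `r` onto `|a⟩`, apply `σ_X^a` to register `t`. -/
def Con {n : ℕ} (c r t : Fin n) (a : Bool) : QState n →ₗ[ℂ] QState n :=
  Xpow a t ∘ₗ proj r a ∘ₗ CNOTgate c r

/-- The Connection:Add operation `Add^{c₁,c₂}_{r→t}` with measurement outcome `a`:
apply `CNOT^{(c₁,r)}`, then `CNOT^{(c₂,r)}`, project `r` onto `|a⟩`, apply `σ_X^a` to `t`. -/
def AddOp {n : ℕ} (c₁ c₂ r t : Fin n) (a : Bool) : QState n →ₗ[ℂ] QState n :=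
  Con c₂ r t a ∘ₗ CNOTgate c₁ r

/-- The Connection:Fanout operation `Fanout^c_{r₁→t₁, r₂→t₂}` with outcomes `a₁, a₂`. -/
def Fanout {n : ℕ} (c r₁ t₁ r₂ t₂ : Fin n) (a₁ a₂ : Bool) : QState n →ₗ[ℂ] QState n :=
  Con c r₂ t₂ a₂ ∘ₗ Con c r₁ t₁ a₁

/-- The Removal operation `Rem_{r→t}` with measurement outcome `a`:
apply `H` to `r`, project `r` onto `|a⟩`, apply `σ_Z^a` to `t`. -/
def Rem {n : ℕ} (r t : Fin n) (a : Bool) : QState n →ₗ[ℂ] QState n :=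
  Zpow a t ∘ₗ proj r a ∘ₗ Hgate r

/-- The Removal:Add operation `RemAdd_{r→t₁,t₂}` with measurement outcome `a`:
apply `H` to `r`, project `r` onto `|a⟩`, apply `σ_Z^a` to both `t₁` and `t₂`. -/
def RemAdd {n : ℕ} (r t₁ t₂ : Fin n) (a : Bool) : QState n →ₗ[ℂ] QState n :=
  Zpow a t₂ ∘ₗ Zpow a t₁ ∘ₗ proj r a ∘ₗ Hgate r


/-- Lift a gate on the qubit registers to `V₁ ⊗ (V₂ ⊗ (qubits ⊗ W))`. -/
def liftVVW (V₁ V₂ W : Type*) [AddCommGroup V₁] [Module ℂ V₁] [AddCommGroup V₂] [Module ℂ V₂]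
    [AddCommGroup W] [Module ℂ W] {k : ℕ} (g : QState k →ₗ[ℂ] QState k) :
    V₁ ⊗[ℂ] (V₂ ⊗[ℂ] (QState k ⊗[ℂ] W)) →ₗ[ℂ] V₁ ⊗[ℂ] (V₂ ⊗[ℂ] (QState k ⊗[ℂ] W)) :=
  LinearMap.lTensor V₁ (LinearMap.lTensor V₂ (LinearMap.rTensor W g))

/-!
CNOT and `σ_X` act on basis states through involutions of the bit strings, and the
measurement keeps or kills a basis state, so everything can be computed on kets. On the
summand `|b b⟩_{CD}` of the Bell pair, the two CNOTs write `A ⊕ B ⊕ b` into `C`; the outcome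
`a` selects the single branch `b = a ⊕ A ⊕ B`, and `σ_X^a` turns `D` into `A ⊕ B`. The factors
`ψ`, `φ`, `Φ` are spectators.
-/

open Function

section Gates

variable {n : ℕ}

theorem ket_comp_of_involutive {f : (Fin n → Bool) → Fin n → Bool} (hf : Involutive f)
    (x : Fin n → Bool) : ket x ∘ f = ket (f x) := by
  funext y
  simp only [comp_apply, ket, hf.eq_iff]

theorem involutive_update_xor {c t : Fin n} (h : c ≠ t) :
    Involutive fun x : Fin n → Bool => update x t (xor (x c) (x t)) := by
  intro x
  simp [update_of_ne h]

theorem involutive_update_not (i : Fin n) :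
    Involutive fun x : Fin n → Bool => update x i (!(x i)) := by
  intro x
  simp

theorem CNOTgate_ket {c t : Fin n} (h : c ≠ t) (x : Fin n → Bool) :
    CNOTgate c t (ket x) = ket (update x t (xor (x c) (x t))) :=
  ket_comp_of_involutive (involutive_update_xor h) x

theorem Xpow_ket (a : Bool) (i : Fin n) (x : Fin n → Bool) :
    Xpow a i (ket x) = ket (update x i (xor a (x i))) := by
  cases a
  · simp [Xpow]
  · simp only [Xpow, if_true, Bool.true_xor]
    exact ket_comp_of_involutive (involutive_update_not i) x

theorem proj_ket (i : Fin n) (a : Bool) (x : Fin n → Bool) :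
    proj i a (ket x) = if x i = a then ket x else 0 := by
  funext y
  by_cases hy : y = x
  · subst hy; simp [proj, ket, ite_apply]
  · simp [proj, ket, hy, ite_apply]

end Gates

section Add

variable {n : ℕ} {c₁ c₂ r t : Fin n}

theorem CNOTgate_CNOTgate_ket_update (h₁r : c₁ ≠ r) (h₂r : c₂ ≠ r) (h₁t : c₁ ≠ t)
    (h₂t : c₂ ≠ t) (hrt : r ≠ t) (b : Bool) (x : Fin n → Bool) :
    CNOTgate c₂ r (CNOTgate c₁ r (ket (update (update x r b) t b)))
      = ket (update (update x r (xor (xor (x c₁) (x c₂)) b)) t b) := by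
  have hr : ∀ v w : Bool, update (update (update x r v) t b) r w = update (update x r w) t b := by
    intro v w
    rw [update_comm hrt.symm, update_idem, update_comm hrt]
  simp only [CNOTgate_ket h₁r, CNOTgate_ket h₂r, update_of_ne h₁r, update_of_ne h₂r,
    update_of_ne h₁t, update_of_ne h₂t, update_of_ne hrt, update_self, hr]
  rw [Bool.xor_left_comm, ← Bool.xor_assoc]

theorem AddOp_ket_update_update (h₁r : c₁ ≠ r) (h₂r : c₂ ≠ r) (h₁t : c₁ ≠ t) (h₂t : c₂ ≠ t)
    (hrt : r ≠ t) (a b : Bool) (x : Fin n → Bool) :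
    AddOp c₁ c₂ r t a (ket (update (update x r b) t b))
      = if xor (xor (x c₁) (x c₂)) b = a then
          ket (update (update x r a) t (xor (x c₁) (x c₂))) else 0 := by
  simp only [AddOp, Con, LinearMap.comp_apply, CNOTgate_CNOTgate_ket_update h₁r h₂r h₁t h₂t hrt,
    proj_ket, update_of_ne hrt, update_self]
  split_ifs with h
  · subst h
    simp [Xpow_ket]
  · exact map_zero _

-- Exactly one branch of the Bell pair on `r, t` survives the measurement of `r`.
theorem AddOp_ket_bell (h₁r : c₁ ≠ r) (h₂r : c₂ ≠ r) (h₁t : c₁ ≠ t) (h₂t : c₂ ≠ t)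
    (hrt : r ≠ t) (a : Bool) (x : Fin n → Bool) :
    AddOp c₁ c₂ r t a
        (ket (update (update x r false) t false) + ket (update (update x r true) t true))
      = ket (update (update x r a) t (xor (x c₁) (x c₂))) := by
  rw [map_add, AddOp_ket_update_update h₁r h₂r h₁t h₂t hrt,
    AddOp_ket_update_update h₁r h₂r h₁t h₂t hrt]
  generalize xor (x c₁) (x c₂) = s
  cases s <;> cases a <;> simp

end Add

theorem update_update_vecFour {α : Type*} (x₀ x₁ x₂ x₃ y₂ y₃ : α) :
    update (update ![x₀, x₁, x₂, x₃] 2 y₂) 3 y₃ = ![x₀, x₁, y₂, y₃] := by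
  funext i
  fin_cases i <;> rfl

theorem AddOp_ket_bell_four (a A B : Bool) :
    AddOp (0 : Fin 4) 1 2 3 a (ket ![A, B, false, false] + ket ![A, B, true, true])
      = ket ![A, B, a, xor A B] := by
  simpa only [update_update_vecFour, Matrix.cons_val_zero, Matrix.cons_val_one,
    Matrix.head_cons] using
    AddOp_ket_bell (c₁ := 0) (c₂ := 1) (r := 2) (t := 3) (by decide) (by decide) (by decide)
      (by decide) (by decide) a ![A, B, false, false]

theorem liftVVW_tmul (V₁ V₂ W : Type*) [AddCommGroup V₁] [Module ℂ V₁] [AddCommGroup V₂]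
    [Module ℂ V₂] [AddCommGroup W] [Module ℂ W] {k : ℕ} (g : QState k →ₗ[ℂ] QState k)
    (v₁ : V₁) (v₂ : V₂) (q : QState k) (w : W) :
    liftVVW V₁ V₂ W g (v₁ ⊗ₜ (v₂ ⊗ₜ (q ⊗ₜ w))) = v₁ ⊗ₜ (v₂ ⊗ₜ (g q ⊗ₜ w)) :=
  rfl

theorem add_action_general
    (V₁ V₂ W : Type*) [NormedAddCommGroup V₁] [InnerProductSpace ℂ V₁]
    [NormedAddCommGroup V₂] [InnerProductSpace ℂ V₂]
    [NormedAddCommGroup W] [InnerProductSpace ℂ W]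
    (ψ₀ ψ₁ : V₁) (φ₀ φ₁ : V₂) (Φ : W) (α β γ δ : ℂ) (a : Bool) :
    liftVVW V₁ V₂ W (AddOp (0 : Fin 4) 1 2 3 a)
      ((Real.sqrt 2 : ℂ)⁻¹ •
        ((α * γ) • (ψ₀ ⊗ₜ[ℂ] (φ₀ ⊗ₜ[ℂ] ((ket ![false, false, false, false]
              + ket ![false, false, true, true]) ⊗ₜ[ℂ] Φ)))
          + (α * δ) • (ψ₀ ⊗ₜ[ℂ] (φ₁ ⊗ₜ[ℂ] ((ket ![false, true, false, false]
              + ket ![false, true, true, true]) ⊗ₜ[ℂ] Φ)))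
          + (β * γ) • (ψ₁ ⊗ₜ[ℂ] (φ₀ ⊗ₜ[ℂ] ((ket ![true, false, false, false]
              + ket ![true, false, true, true]) ⊗ₜ[ℂ] Φ)))
          + (β * δ) • (ψ₁ ⊗ₜ[ℂ] (φ₁ ⊗ₜ[ℂ] ((ket ![true, true, false, false]
              + ket ![true, true, true, true]) ⊗ₜ[ℂ] Φ)))))
    = (Real.sqrt 2 : ℂ)⁻¹ •
        ((α * γ) • (ψ₀ ⊗ₜ[ℂ] (φ₀ ⊗ₜ[ℂ] (ket ![false, false, a, false] ⊗ₜ[ℂ] Φ)))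
          + (β * δ) • (ψ₁ ⊗ₜ[ℂ] (φ₁ ⊗ₜ[ℂ] (ket ![true, true, a, false] ⊗ₜ[ℂ] Φ)))
          + (α * δ) • (ψ₀ ⊗ₜ[ℂ] (φ₁ ⊗ₜ[ℂ] (ket ![false, true, a, true] ⊗ₜ[ℂ] Φ)))
          + (β * γ) • (ψ₁ ⊗ₜ[ℂ] (φ₀ ⊗ₜ[ℂ] (ket ![true, false, a, true] ⊗ₜ[ℂ] Φ)))) := by
  simp only [map_add (liftVVW V₁ V₂ W (AddOp (0 : Fin 4) 1 2 3 a)),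
    map_smul (liftVVW V₁ V₂ W (AddOp (0 : Fin 4) 1 2 3 a)), liftVVW_tmul, AddOp_ket_bell_four,
    Bool.xor_false, Bool.xor_true, Bool.not_false, Bool.not_true]
  congr 1
  abel

/-- **Connection:Add** (Lemma 3). Registers `A, B, C, D` are `0,…,3`. Applying
`Add^{A,B}_{C→D}` with measurement outcome `a` to
`(α|ψ₀⟩|0⟩_A + β|ψ₁⟩|1⟩_A) ⊗ (γ|φ₀⟩|0⟩_B + δ|φ₁⟩|1⟩_B) ⊗ |Ψ⁺⟩_{CD} ⊗ |Φ⟩` yields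
`(1/√2)[(αγ|ψ₀⟩|φ₀⟩|00⟩_{AB} + βδ|ψ₁⟩|φ₁⟩|11⟩_{AB})|0⟩_D
      + (αδ|ψ₀⟩|φ₁⟩|01⟩_{AB} + βγ|ψ₁⟩|φ₀⟩|10⟩_{AB})|1⟩_D] ⊗ |Φ⟩`
(with the measured register `C` left in `|a⟩`, to be disregarded). -/
theorem add_action
    (V₁ V₂ W : Type*) [NormedAddCommGroup V₁] [InnerProductSpace ℂ V₁] [FiniteDimensional ℂ V₁]
    [NormedAddCommGroup V₂] [InnerProductSpace ℂ V₂] [FiniteDimensional ℂ V₂]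
    [NormedAddCommGroup W] [InnerProductSpace ℂ W] [FiniteDimensional ℂ W]
    (ψ₀ ψ₁ : V₁) (φ₀ φ₁ : V₂) (Φ : W) (α β γ δ : ℂ)
    (hnorm₁ : ‖α‖ ^ 2 + ‖β‖ ^ 2 = 1)
    (hnorm₂ : ‖γ‖ ^ 2 + ‖δ‖ ^ 2 = 1) (a : Bool) :
    liftVVW V₁ V₂ W (AddOp (0 : Fin 4) 1 2 3 a)
      ((Real.sqrt 2 : ℂ)⁻¹ •
        ((α * γ) • (ψ₀ ⊗ₜ[ℂ] (φ₀ ⊗ₜ[ℂ] ((ket ![false, false, false, false]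
              + ket ![false, false, true, true]) ⊗ₜ[ℂ] Φ)))
          + (α * δ) • (ψ₀ ⊗ₜ[ℂ] (φ₁ ⊗ₜ[ℂ] ((ket ![false, true, false, false]
              + ket ![false, true, true, true]) ⊗ₜ[ℂ] Φ)))
          + (β * γ) • (ψ₁ ⊗ₜ[ℂ] (φ₀ ⊗ₜ[ℂ] ((ket ![true, false, false, false]
              + ket ![true, false, true, true]) ⊗ₜ[ℂ] Φ)))
          + (β * δ) • (ψ₁ ⊗ₜ[ℂ] (φ₁ ⊗ₜ[ℂ] ((ket ![true, true, false, false]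
              + ket ![true, true, true, true]) ⊗ₜ[ℂ] Φ)))))
    = (Real.sqrt 2 : ℂ)⁻¹ •
        ((α * γ) • (ψ₀ ⊗ₜ[ℂ] (φ₀ ⊗ₜ[ℂ] (ket ![false, false, a, false] ⊗ₜ[ℂ] Φ)))
          + (β * δ) • (ψ₁ ⊗ₜ[ℂ] (φ₁ ⊗ₜ[ℂ] (ket ![true, true, a, false] ⊗ₜ[ℂ] Φ)))
          + (α * δ) • (ψ₀ ⊗ₜ[ℂ] (φ₁ ⊗ₜ[ℂ] (ket ![false, true, a, true] ⊗ₜ[ℂ] Φ)))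
          + (β * γ) • (ψ₁ ⊗ₜ[ℂ] (φ₀ ⊗ₜ[ℂ] (ket ![true, false, a, true] ⊗ₜ[ℂ] Φ)))) :=
  add_action_general V₁ V₂ W ψ₀ ψ₁ φ₀ φ₁ Φ α β γ δ a

end

end QNC
end

section
/- Consider seven qubit registers A', B, D, E', F, H, J in the state |Ψ₅⟩ = (1/2)(|000000⟩_{A'BDE'FH} + |111111⟩_{A'BDE'FH})|0⟩_J + (1/2)(|010101⟩_{A'BDE'FH} + |101010⟩_{A'BDE'FH})|1⟩_J. Then for each measurement outcome a ∈ {0,1}, applying the Hadamard gate to J, projecting J onto |a⟩, and applying σ_Z^a to both registers D and H (i.e., applying RemAdd_{J→D,H}), yields the vector (1/√2)·|Ψ₆⟩, where |Ψ₆⟩ = (1/2)(|000000⟩_{A'BDE'FH} + |111111⟩_{A'BDE'FH}) + (1/2)(|010101⟩_{A'BDE'FH} + |101010⟩_{A'BDE'FH}). Moreover, for each pair of subsequent outcomes (b₁, b₂) ∈ {0,1}², applying Hadamard to D, projecting D onto |b₁⟩, applying σ_Z^{b₁} to A', then applying Hadamard to H, projecting H onto |b₂⟩, and applying σ_Z^{b₂}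 to E' (i.e., applying Rem_{D→A'} and Rem_{H→E'}) yields the vector (1/2)·|Ψ⁺⟩_{A'F} ⊗ |Ψ⁺⟩_{BE'}. (These are steps 6 and 7 of the encoding protocol, producing the two crossing EPR pairs.) -/
open scoped TensorProduct

namespace QNC

noncomputable section

set_option linter.unnecessarySeqFocus false

lemma ket_cons (b0 b1 b2 b3 b4 b5 b6 : Bool) (x : Fin 7 → Bool) :
    ket ![b0,b1,b2,b3,b4,b5,b6] x
      = if x 0 = b0 ∧ x 1 = b1 ∧ x 2 = b2 ∧ x 3 = b3 ∧ x 4 = b4 ∧ x 5 = b5 ∧ x 6 = b6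
        then 1 else 0 := by
  simp only [ket]
  by_cases h : x = ![b0,b1,b2,b3,b4,b5,b6]
  · subst h
    rw [if_pos rfl, if_pos ⟨rfl, rfl, rfl, rfl, rfl, rfl, rfl⟩]
  · rw [if_neg h, if_neg]
    rintro ⟨h0, h1, h2, h3, h4, h5, h6⟩
    apply h; funext i; fin_cases i <;> assumption

lemma sqrt2_inv_mul (z : ℂ) :
    (Real.sqrt 2 : ℂ)⁻¹ * ((Real.sqrt 2 : ℂ)⁻¹ * z) = 2⁻¹ * z := by
  have h : (Real.sqrt 2 : ℂ) * (Real.sqrt 2 : ℂ) = 2 := by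
    norm_cast
    exact Real.mul_self_sqrt (by norm_num)
  rw [← mul_assoc, ← mul_inv, h]

set_option maxHeartbeats 4000000 in
/-- **Steps 6 and 7 of the encoding protocol.** The seven registers
`A', B, D, E', F, H, J` are `0,…,6`. Applying `RemAdd_{J→D,H}` with outcome `a` to
`|Ψ₅⟩` yields `(1/√2)|Ψ₆⟩`, where
`|Ψ₆⟩ = (1/2)(|000000⟩ + |111111⟩ + |010101⟩ + |101010⟩)_{A'BDE'FH}`; and applying
`Rem_{D→A'}` with outcome `b₁` followed by `Rem_{H→E'}` with outcome `b₂` to `|Ψ₆⟩`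
yields `(1/2)|Ψ⁺⟩_{A'F} ⊗ |Ψ⁺⟩_{BE'}` (measured registers left in basis states, to be
disregarded). -/
theorem encoding_step6_step7 (a b₁ b₂ : Bool) :
    RemAdd (6 : Fin 7) 2 5 a
      ((2 : ℂ)⁻¹ •
        (ket ![false, false, false, false, false, false, false]
          + ket ![true, true, true, true, true, true, false]
          + ket ![false, true, false, true, false, true, true]
          + ket ![true, false, true, false, true, false, true]))
    = (Real.sqrt 2 : ℂ)⁻¹ • ((2 : ℂ)⁻¹ •
        (ket ![false, false, false, false, false, false, a]
          + ket ![true, true, true, true, true, true, a]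
          + ket ![false, true, false, true, false, true, a]
          + ket ![true, false, true, false, true, false, a]))
    ∧ Rem (5 : Fin 7) 3 b₂ (Rem (2 : Fin 7) 0 b₁
        ((2 : ℂ)⁻¹ •
          (ket ![false, false, false, false, false, false, a]
            + ket ![true, true, true, true, true, true, a]
            + ket ![false, true, false, true, false, true, a]
            + ket ![true, false, true, false, true, false, a])))
      = (2 : ℂ)⁻¹ • ((2 : ℂ)⁻¹ •
          ∑ s : Bool, ∑ t : Bool, ket ![s, t, b₁, t, s, b₂, a]) := by
  constructor
  · rcases a <;>
    · funext x
      simp only [RemAdd, Zpow, Zgate, proj, Hgate, LinearMap.comp_apply, LinearMap.coe_mk,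
        AddHom.coe_mk, Bool.false_eq_true, if_false, if_true, LinearMap.id_coe, id_eq,
        Pi.add_apply, Pi.smul_apply, smul_eq_mul, ket_cons, Function.update_apply]
      rcases Bool.eq_false_or_eq_true (x 0) with h0|h0 <;>
      rcases Bool.eq_false_or_eq_true (x 1) with h1|h1 <;>
      rcases Bool.eq_false_or_eq_true (x 2) with h2|h2 <;>
      rcases Bool.eq_false_or_eq_true (x 3) with h3|h3 <;>
      rcases Bool.eq_false_or_eq_true (x 4) with h4|h4 <;>
      rcases Bool.eq_false_or_eq_true (x 5) with h5|h5 <;>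
      rcases Bool.eq_false_or_eq_true (x 6) with h6|h6 <;>
      simp [h0, h1, h2, h3, h4, h5, h6]
  · rcases a <;> rcases b₁ <;> rcases b₂ <;>
    · funext x
      simp only [Rem, Zpow, Zgate, proj, Hgate, LinearMap.comp_apply, LinearMap.coe_mk,
        AddHom.coe_mk, Bool.false_eq_true, if_false, if_true, LinearMap.id_coe, id_eq,
        Pi.add_apply, Pi.smul_apply, smul_eq_mul, Finset.sum_apply, Fintype.sum_bool,
        ket_cons, Function.update_apply]
      rcases Bool.eq_false_or_eq_true (x 0) with h0|h0 <;>
      rcases Bool.eq_false_or_eq_true (x 1) with h1|h1 <;>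
      rcases Bool.eq_false_or_eq_true (x 2) with h2|h2 <;>
      rcases Bool.eq_false_or_eq_true (x 3) with h3|h3 <;>
      rcases Bool.eq_false_or_eq_true (x 4) with h4|h4 <;>
      rcases Bool.eq_false_or_eq_true (x 5) with h5|h5 <;>
      rcases Bool.eq_false_or_eq_true (x 6) with h6|h6 <;>
      simp [h0, h1, h2, h3, h4, h5, h6, mul_assoc, sqrt2_inv_mul]

end

end QNC
end
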